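/- In the 4-item 4-agent non-existence instance, Case 2 fails: if Dana gets no item while Alice gets exactly one item, then some agent among Bob and Carl gets at least two items, and since d > b/2 > c/2, Dana can afford the cheaper of that agent's items, so the allocation cannot be a competitive equilibrium. -/
import Mathlib


open Finset

/-- `r A B` means bundle `A` is strictly preferred to bundle `B`.
The preference is transitive, asymmetric, total (strict) and monotone. -/
def StrictMonoPref {m : ℕ} (r : Finset (Fin m) → Finset (Fin m) → Prop) : Prop :=
  (∀ A B C, r A B → r B C → r A C) ∧
  (∀ A B, r A B → ¬ r B A) ∧
  (∀ A B : Finset (Fin m), A ≠ B → r A B ∨ r B A) ∧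
  (∀ A B : Finset (Fin m), A ⊂ B → r B A)

/-- Competitive equilibrium: positive prices, the bundles partition all items,
every agent with a non-empty bundle pays exactly their income, and every agent
either strictly prefers their own bundle to, or cannot afford, any other bundle. -/
def IsCE {m n : ℕ} (t : Fin n → ℝ)
    (pref : Fin n → Finset (Fin m) → Finset (Fin m) → Prop)
    (p : Fin m → ℝ) (X : Fin n → Finset (Fin m)) : Prop :=
  (∀ k, 0 < p k) ∧
  (∀ i j, i ≠ j → Disjoint (X i) (X j)) ∧
  (Finset.univ.biUnion X = Finset.univ) ∧
  (∀ i, X i ≠ ∅ → ∑ k ∈ X i, p k = t i) ∧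
  (∀ i (Y : Finset (Fin m)), Y ≠ X i → pref i (X i) Y ∨ t i < ∑ k ∈ Y, p k)

/-- **Case 2 of the 4-item 4-agent non-existence example.**
Agents Alice (0), Bob (1), Carl (2), Dana (3) with incomes `a, b, c, d`
satisfying `2d > b > c > d > 0` (and `a > 0`); preferences are strict and
monotone, so Dana prefers any item to the empty bundle.  There is no
competitive equilibrium in which Dana gets no item while Alice gets exactly one
item: then Bob or Carl would hold at least two items, whose prices sum to
exactly their income `b` (resp. `c`), so the cheaper costs at most
`b/2 < d` (resp. `c/2 < d`) and Dana can afford it — contradiction. -/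
theorem no_CE_Dana_empty_Alice_one
    (a b c d : ℝ) (ha : 0 < a)
    (h1 : 2 * d > b) (h2 : b > c) (h3 : c > d) (h4 : d > 0)
    (pref : Fin 4 → Finset (Fin 4) → Finset (Fin 4) → Prop)
    (hpref : ∀ i, StrictMonoPref (pref i)) :
    ¬ ∃ (p : Fin 4 → ℝ) (X : Fin 4 → Finset (Fin 4)),
        IsCE ![a, b, c, d] pref p X ∧ X 3 = ∅ ∧ (X 0).card = 1 := by
  rintro ⟨p, X, ⟨hpos, hdisj, hcover, hpay, hopt⟩, hD, hA⟩
  -- total cardinality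
  have hcard : ∑ i : Fin 4, (X i).card = 4 := by
    have := Finset.card_biUnion (s := (univ : Finset (Fin 4))) (t := X)
      (fun i _ j _ hij => hdisj i j hij)
    rw [hcover] at this
    simpa using this.symm
  have hsum4 : (X 0).card + (X 1).card + (X 2).card + (X 3).card = 4 := by
    simpa [Fin.sum_univ_four] using hcard
  rw [hD] at hsum4
  simp at hsum4
  -- one of Bob/Carl has ≥ 2 items
  have key : ∀ i : Fin 4, 2 ≤ (X i).card → (![a, b, c, d] : Fin 4 → ℝ) i < 2 * d →
      False := by
    intro i hi ht
    have hne : X i ≠ ∅ := by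
      intro h; rw [h] at hi; simp at hi
    have hpayi := hpay i hne
    obtain ⟨k, hk, hkmin⟩ := (X i).exists_min_image p (Finset.nonempty_of_ne_empty hne)
    have hmul : (X i).card • p k ≤ ∑ j ∈ X i, p j :=
      Finset.card_nsmul_le_sum _ _ _ (fun j hj => hkmin j hj)
    have h2pk : 2 * p k ≤ (![a, b, c, d] : Fin 4 → ℝ) i := by
      rw [← hpayi]
      calc 2 * p k ≤ ((X i).card : ℝ) * p k := by
            apply mul_le_mul_of_nonneg_right _ (hpos k).le
            exact_mod_cast hi
        _ ≤ ∑ j ∈ X i, p j := by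
            simpa [nsmul_eq_mul] using hmul
    have hpkd : p k < d := by nlinarith
    -- Dana can afford {k}
    have hYne : ({k} : Finset (Fin 4)) ≠ X 3 := by
      rw [hD]; simp
    rcases hopt 3 {k} hYne with hp | hp
    · rw [hD] at hp
      have hmono := (hpref 3).2.2.2 ∅ {k} (Finset.empty_ssubset.mpr (by simp))
      exact (hpref 3).2.1 _ _ hp hmono
    · have : (![a, b, c, d] : Fin 4 → ℝ) 3 = d := rfl
      rw [this] at hp
      simp at hp
      linarith
  have h12 : 2 ≤ (X 1).card ∨ 2 ≤ (X 2).card := by omega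
  rcases h12 with h | h
  · exact key 1 h (by show b < 2 * d; linarith)
  · exact key 2 h (by show c < 2 * d; linarith)
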